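/- Deterministic erasure in the XOR construction (Lemma 1): for the distribution p(x; U, 𝒮) and sensitive set K = {m+1,…,m+k}, and for any permutation (o_1,…,o_{m+k}) of {1,…,m+k}, the sequential privacy mechanism applied in the order o_1,…,o_{m+k} has deterministic erasure decisions: at every step i, the conditional probability of erasure w(y_{o_i} = ∗ | x_{o_i}, x_K, y_{o_{[i−1]}}) is either 0 or 1, for every realization occurring with positive probability. -/

import Mathlib

/-!
Given the outputs produced so far, the realization is uniform on an affine subset `E` of
`(𝔽₂^k)^(m+k)`: initially `E` is the image of the linear map `b ↦ X(b)`, and every kept output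
intersects it with a coordinate hyperplane. Nonempty fibres of an affine set over a linear map
all have the same size, so `P(X_i = x_i | X_K = u, history)` is either `0` or one fixed positive
value, the one taken at `u = x_K`. The keep probability `min_u P(⋯ | u) / P(⋯ | x_K)` is therefore
`1` or `0`, and a translation argument shows that which one does not depend on `x ∈ E`. Hence
the next history again leaves `X` uniform on an affine set (`E`, `E ∩ {x_i = a}` or `∅`), and
induction on the step finishes the proof.
-/

open Finset
open scoped Classical

noncomputable section

namespace GenotypeHiding

variable {X : Type} [Fintype X] [DecidableEq X]

/-- Restriction of a sequence `x` to the sensitive positions `K`. -/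
def restr {n : ℕ} (K : Finset (Fin n)) (x : Fin n → X) : ↥K → X := fun i => x (i : Fin n)

/-- `y` agrees with the history `h` on all already-visited coordinates (those satisfying
the predicate `vis`). -/
def agreeV {n : ℕ} (vis : Fin n → Prop) (y h : Fin n → Option X) : Prop :=
  ∀ j : Fin n, vis j → y j = h j

/-- The coordinates visited before step `t` when processing in the order
`σ 0, σ 1, …` given by the permutation `σ`. -/
def visOrd {n : ℕ} (σ : Equiv.Perm (Fin n)) (t : ℕ) : Fin n → Prop :=
  fun j => ((σ.symm j : Fin n) : ℕ) < t

/-- `P(X = x, Y = h on the visited coordinates)` under the joint law `J` of `(X, Y)`. -/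
def prXH {n : ℕ} (J : (Fin n → X) → (Fin n → Option X) → ℝ) (vis : Fin n → Prop)
    (x : Fin n → X) (h : Fin n → Option X) : ℝ :=
  ∑ y : Fin n → Option X, if agreeV vis y h then J x y else 0

/-- `P(Y_i = b, X = x, Y = h on the visited coordinates)` under the joint law `J`. -/
def prXHY {n : ℕ} (J : (Fin n → X) → (Fin n → Option X) → ℝ) (vis : Fin n → Prop)
    (x : Fin n → X) (h : Fin n → Option X) (i : Fin n) (b : Option X) : ℝ :=
  ∑ y : Fin n → Option X, if y i = b ∧ agreeV vis y h then J x y else 0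

/-- `P(X_K = u, Y = h on the visited coordinates)` under the joint law `J`. -/
def prKH {n : ℕ} (J : (Fin n → X) → (Fin n → Option X) → ℝ) (K : Finset (Fin n))
    (vis : Fin n → Prop) (u : ↥K → X) (h : Fin n → Option X) : ℝ :=
  ∑ x : Fin n → X, ∑ y : Fin n → Option X,
    if restr K x = u ∧ agreeV vis y h then J x y else 0

/-- `P(X_i = a, X_K = u, Y = h on the visited coordinates)` under the joint law `J`. -/
def prIKH {n : ℕ} (J : (Fin n → X) → (Fin n → Option X) → ℝ) (K : Finset (Fin n))
    (vis : Fin n → Prop) (i : Fin n) (a : X) (u : ↥K → X) (h : Fin n → Option X) : ℝ :=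
  ∑ x : Fin n → X, ∑ y : Fin n → Option X,
    if x i = a ∧ restr K x = u ∧ agreeV vis y h then J x y else 0

/-- `P(X_i = a | X_K = u, Y = h on the visited coordinates)` under the joint law `J`. -/
def condX {n : ℕ} (J : (Fin n → X) → (Fin n → Option X) → ℝ) (K : Finset (Fin n))
    (vis : Fin n → Prop) (i : Fin n) (a : X) (u : ↥K → X) (h : Fin n → Option X) : ℝ :=
  prIKH J K vis i a u h / prKH J K vis u h

/-- `min_u P(X_i = a | X_K = u, Y = h on visited)`, the minimum over all `u` with
positive probability. -/
def minC {n : ℕ} (J : (Fin n → X) → (Fin n → Option X) → ℝ) (K : Finset (Fin n))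
    (vis : Fin n → Prop) (i : Fin n) (a : X) (h : Fin n → Option X) : ℝ :=
  sInf {r : ℝ | ∃ u : ↥K → X, 0 < prKH J K vis u h ∧ r = condX J K vis i a u h}

/-- `J` is the joint law of `(X, Y)` where `Y` is generated from `X ∼ p` by the
sequential privacy mechanism processing the coordinates in the order
`σ 0, σ 1, …, σ (n-1)`. -/
def IsSequentialMechanismOrd {n : ℕ} (p : (Fin n → X) → ℝ) (K : Finset (Fin n))
    (σ : Equiv.Perm (Fin n)) (J : (Fin n → X) → (Fin n → Option X) → ℝ) : Prop :=
  (∀ x y, 0 ≤ J x y) ∧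
  (∀ x, ∑ y : Fin n → Option X, J x y = p x) ∧
  (∀ x y, 0 < J x y → ∀ i : Fin n, y i = some (x i) ∨ y i = none) ∧
  (∀ (t : Fin n) (x : Fin n → X) (h : Fin n → Option X),
    0 < prXH J (visOrd σ (t : ℕ)) x h →
    prXHY J (visOrd σ (t : ℕ)) x h (σ t) (some (x (σ t)))
      = (minC J K (visOrd σ (t : ℕ)) (σ t) (x (σ t)) h
          / condX J K (visOrd σ (t : ℕ)) (σ t) (x (σ t)) (restr K x) h)
          * prXH J (visOrd σ (t : ℕ)) x h)

/-- The edge set of the bipartite graph: pairs `(i, j)` with `i ∈ S j`.  Each edge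
carries an independent uniform random bit `b_{i,j}`. -/
def Edge {m k : ℕ} (S : Fin k → Finset (Fin m)) : Type :=
  {q : Fin m × Fin k // q.1 ∈ S q.2}

instance {m k : ℕ} (S : Fin k → Finset (Fin m)) : Fintype (Edge S) := by
  unfold Edge; infer_instance

/-- `X_i` for `i ∈ {1,…,m}`: the tuple of bits `(b_{i,j})_{j : i ∈ S_j}` (padded by
`false` outside the coordinates `j` with `i ∈ S j`). -/
def Xlow {m k : ℕ} (S : Fin k → Finset (Fin m)) (b : Edge S → Bool) (i : Fin m) :
    Fin k → Bool :=
  fun j => if h : i ∈ S j then b ⟨(i, j), h⟩ else false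

/-- The XOR parity `⊕_{i ∈ S_j} b_{i,j}`. -/
def parity {m k : ℕ} (S : Fin k → Finset (Fin m)) (b : Edge S → Bool) (j : Fin k) :
    Bool :=
  decide ((((S j).attach.filter (fun i => b ⟨(i.1, j), i.2⟩)).card) % 2 = 1)

/-- The sequence `X = (X_1, …, X_{m+k})` of the XOR construction, as a function of the
random bits: the first `m` coordinates are the tuples `X_i = (b_{i,j})_{j : i ∈ S_j}` and
the last `k` coordinates encode the parities `X_{m+j} = ⊕_{i ∈ S_j} b_{i,j}` (as constant
tuples). -/
def seqOf {m k : ℕ} (S : Fin k → Finset (Fin m)) (b : Edge S → Bool) :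
    Fin (m + k) → (Fin k → Bool) :=
  fun i =>
    if h : (i : ℕ) < m then Xlow S b ⟨(i : ℕ), h⟩
    else fun _ => parity S b ⟨(i : ℕ) - m, by omega⟩

/-- The data distribution `p(x; U, 𝒮)` of the XOR construction: the law of
`seqOf S b` for independent uniform random bits `b`. -/
def pXor {m k : ℕ} (S : Fin k → Finset (Fin m)) :
    (Fin (m + k) → (Fin k → Bool)) → ℝ :=
  fun x => ∑ b : Edge S → Bool,
    if seqOf S b = x then (1 / 2 : ℝ) ^ (Fintype.card (Edge S)) else 0

/-- The sensitive set `K = {m+1, …, m+k}` of the XOR construction. -/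
def sensXor (m k : ℕ) : Finset (Fin (m + k)) :=
  Finset.univ.filter (fun i : Fin (m + k) => m ≤ (i : ℕ))

end GenotypeHiding

namespace GenotypeHiding

section Affine

variable {G H : Type*} [AddCommGroup G] [AddCommGroup H]

/-- Equivalently, `E` is empty or a coset of an additive subgroup. -/
def IsAffine (E : Finset G) : Prop :=
  ∀ x ∈ E, ∀ y ∈ E, ∀ z ∈ E, x - y + z ∈ E

lemma isAffine_image_univ [DecidableEq G] [Fintype H] (f : H →+ G) :
    IsAffine (univ.image f) := by
  simp only [IsAffine, mem_image, mem_univ, true_and, forall_exists_index,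
    forall_apply_eq_imp_iff]
  exact fun a b c => ⟨a - b + c, by simp⟩

lemma IsAffine.filter {E : Finset G} (hE : IsAffine E) {P : G → Prop} [DecidablePred P]
    (hP : ∀ x y z, P x → P y → P z → P (x - y + z)) : IsAffine (E.filter P) := by
  simp only [IsAffine, mem_filter]
  exact fun x hx y hy z hz => ⟨hE x hx.1 y hy.1 z hz.1, hP x y z hx.2 hy.2 hz.2⟩

lemma IsAffine.filter_map_eq [DecidableEq H] {E : Finset G} (hE : IsAffine E) (f : G →+ H)
    (u : H) : IsAffine (E.filter (f · = u)) :=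
  hE.filter fun x y z hx hy hz => by simp [hx, hy, hz]

/-- Translation by `y - x` maps the fibre through `x` onto the fibre through `y`. -/
lemma IsAffine.card_fiber_eq [DecidableEq H] {E : Finset G} (hE : IsAffine E) (f : G →+ H)
    {x y : G} (hx : x ∈ E) (hy : y ∈ E) :
    (E.filter (f · = f x)).card = (E.filter (f · = f y)).card := by
  refine card_bij' (fun z _ => z - x + y) (fun z _ => z - y + x) ?_ ?_ ?_ ?_
  · simp only [mem_filter]
    exact fun z hz => ⟨hE z hz.1 x hx y hy, by simp [hz.2]⟩
  · simp only [mem_filter]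
    exact fun z hz => ⟨hE z hz.1 y hy x hx, by simp [hz.2]⟩
  · intro z _; abel
  · intro z _; abel

def AttainedOnFibers {H' : Type*} (E : Finset G) (f : G → H) (g : G → H') (a : H') : Prop :=
  ∀ y ∈ E, ∃ z ∈ E, f z = f y ∧ g z = a

lemma IsAffine.attainedOnFibers {H' : Type*} [AddCommGroup H'] {E : Finset G}
    (hE : IsAffine E) (f : G →+ H) (g : G →+ H') {a : H'} (ha : AttainedOnFibers E f g a)
    {x : G} (hx : x ∈ E) : AttainedOnFibers E f g (g x) := by
  intro y hy
  obtain ⟨z₁, hz₁, hfz₁, hgz₁⟩ := ha y hy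
  obtain ⟨z₂, hz₂, hfz₂, hgz₂⟩ := ha x hx
  exact ⟨x - z₂ + z₁, hE x hx z₂ hz₂ z₁ hz₁, by simp [hfz₁, hfz₂], by simp [hgz₁, hgz₂]⟩

end Affine

section Mechanism

variable {X : Type} [Fintype X] {n : ℕ} {J : (Fin n → X) → (Fin n → Option X) → ℝ}
  {vis : Fin n → Prop}

lemma prXHY_eq_zero_of_prXH_eq_zero [DecidableEq X] (hJ0 : ∀ x y, 0 ≤ J x y)
    {x : Fin n → X} {h : Fin n → Option X} (hx : prXH J vis x h = 0) (i : Fin n)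
    (b : Option X) : prXHY J vis x h i b = 0 := by
  have hterm := (sum_eq_zero_iff_of_nonneg fun y _ => by
    split_ifs <;> simp [hJ0]).mp hx
  refine sum_eq_zero fun y hy => ?_
  have := hterm y hy
  split_ifs at * <;> simp_all

lemma prXHY_some_add_prXHY_none [DecidableEq X] (hJ0 : ∀ x y, 0 ≤ J x y)
    (hsupp : ∀ x y, 0 < J x y → ∀ i, y i = some (x i) ∨ y i = none)
    (x : Fin n → X) (h : Fin n → Option X) (i : Fin n) :
    prXHY J vis x h i (some (x i)) + prXHY J vis x h i none = prXH J vis x h := by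
  rw [prXHY, prXHY, ← sum_add_distrib]
  refine sum_congr rfl fun y _ => ?_
  rcases (hJ0 x y).eq_or_lt with h0 | hpos
  · simp [← h0]
  · rcases hsupp x y hpos i with hy | hy <;> simp [hy]

lemma prXHY_eq_zero_of_ne [DecidableEq X] (hJ0 : ∀ x y, 0 ≤ J x y)
    (hsupp : ∀ x y, 0 < J x y → ∀ i, y i = some (x i) ∨ y i = none)
    (x : Fin n → X) (h : Fin n → Option X) (i : Fin n) {b : Option X}
    (hb : b ≠ some (x i)) (hb' : b ≠ none) : prXHY J vis x h i b = 0 := by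
  refine sum_eq_zero fun y _ => ?_
  rcases (hJ0 x y).eq_or_lt with h0 | hpos
  · simp [← h0]
  · rcases hsupp x y hpos i with hy | hy <;> simp [hy, hb.symm, hb'.symm]

lemma prXHY_eq_ite_of_prXHY_none_eq_zero [DecidableEq X] (hJ0 : ∀ x y, 0 ≤ J x y)
    (hsupp : ∀ x y, 0 < J x y → ∀ i, y i = some (x i) ∨ y i = none)
    {x : Fin n → X} {h : Fin n → Option X} {i : Fin n}
    (hnone : prXHY J vis x h i none = 0) (b : Option X) :
    prXHY J vis x h i b = if b = some (x i) then prXH J vis x h else 0 := by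
  have hsplit := prXHY_some_add_prXHY_none (vis := vis) hJ0 hsupp x h i
  split_ifs with hb
  · rw [hb]; linarith
  · rcases eq_or_ne b none with rfl | hb'
    · exact hnone
    · exact prXHY_eq_zero_of_ne hJ0 hsupp x h i hb hb'

lemma prXHY_eq_ite_of_prXHY_some_eq_zero [DecidableEq X] (hJ0 : ∀ x y, 0 ≤ J x y)
    (hsupp : ∀ x y, 0 < J x y → ∀ i, y i = some (x i) ∨ y i = none)
    {x : Fin n → X} {h : Fin n → Option X} {i : Fin n}
    (hsome : prXHY J vis x h i (some (x i)) = 0) (b : Option X) :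
    prXHY J vis x h i b = if b = none then prXH J vis x h else 0 := by
  have hsplit := prXHY_some_add_prXHY_none (vis := vis) hJ0 hsupp x h i
  split_ifs with hb
  · rw [hb]; linarith
  · rcases eq_or_ne b (some (x i)) with rfl | hb'
    · exact hsome
    · exact prXHY_eq_zero_of_ne hJ0 hsupp x h i hb' hb

lemma prXH_visOrd_zero (σ : Equiv.Perm (Fin n)) (x : Fin n → X) (h : Fin n → Option X) :
    prXH J (visOrd σ 0) x h = ∑ y, J x y := by
  simp [prXH, agreeV, visOrd]

lemma visOrd_succ (σ : Equiv.Perm (Fin n)) (t : Fin n) (j : Fin n) :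
    visOrd σ (t + 1) j ↔ visOrd σ t j ∨ j = σ t := by
  rw [visOrd, visOrd, Nat.lt_succ_iff_lt_or_eq, ← Equiv.symm_apply_eq, Fin.ext_iff]

lemma prXH_visOrd_succ [DecidableEq X] (σ : Equiv.Perm (Fin n)) (t : Fin n)
    (x : Fin n → X) (h : Fin n → Option X) :
    prXH J (visOrd σ (t + 1)) x h = prXHY J (visOrd σ t) x h (σ t) (h (σ t)) := by
  refine sum_congr rfl fun y _ => if_congr ?_ rfl rfl
  simp only [agreeV, visOrd_succ, or_imp, forall_and, forall_eq]
  exact and_comm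

lemma prKH_eq_sum [DecidableEq X] (K : Finset (Fin n)) (u : ↥K → X) (h : Fin n → Option X) :
    prKH J K vis u h = ∑ x, if restr K x = u then prXH J vis x h else 0 := by
  simp only [prKH, prXH, ite_and, sum_ite_irrel, sum_const_zero]

lemma prIKH_eq_sum [DecidableEq X] (K : Finset (Fin n)) (i : Fin n) (a : X) (u : ↥K → X)
    (h : Fin n → Option X) :
    prIKH J K vis i a u h =
      ∑ x, if x i = a ∧ restr K x = u then prXH J vis x h else 0 := by
  simp only [prIKH, prXH, ← and_assoc, ite_and (_ ∧ _), sum_ite_irrel, sum_const_zero]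

end Mechanism

def restrAddHom {X : Type} [AddCommGroup X] {n : ℕ} (K : Finset (Fin n)) :
    (Fin n → X) →+ (↥K → X) where
  toFun := restr K
  map_zero' := rfl
  map_add' _ _ := rfl

@[simp]
lemma coe_restrAddHom {X : Type} [AddCommGroup X] {n : ℕ} (K : Finset (Fin n)) :
    ⇑(restrAddHom (X := X) K) = restr K :=
  rfl

section Uniform

variable {X : Type} [Fintype X] [DecidableEq X] {n : ℕ}
  {J : (Fin n → X) → (Fin n → Option X) → ℝ} {K : Finset (Fin n)} {vis : Fin n → Prop}
  {h : Fin n → Option X} {E : Finset (Fin n → X)} {q : ℝ}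

lemma prKH_eq_card_mul (hU : ∀ x, prXH J vis x h = if x ∈ E then q else 0) (u : ↥K → X) :
    prKH J K vis u h = (E.filter (restr K · = u)).card * q := by
  simp only [prKH_eq_sum, hU, ← ite_and, ← sum_filter, sum_const, nsmul_eq_mul]
  congr 3
  ext x
  simp only [mem_filter, mem_univ, true_and]
  tauto

lemma prIKH_eq_card_mul (hU : ∀ x, prXH J vis x h = if x ∈ E then q else 0) (i : Fin n)
    (a : X) (u : ↥K → X) :
    prIKH J K vis i a u h = ((E.filter (· i = a)).filter (restr K · = u)).card * q := by
  simp only [prIKH_eq_sum, hU, ← ite_and, ← sum_filter, sum_const, nsmul_eq_mul]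
  congr 3
  ext x
  simp only [mem_filter, mem_univ, true_and]
  tauto

lemma condX_eq_card_div (hU : ∀ x, prXH J vis x h = if x ∈ E then q else 0) (hq : q ≠ 0)
    (i : Fin n) (a : X) (u : ↥K → X) :
    condX J K vis i a u h =
      ((E.filter (· i = a)).filter (restr K · = u)).card / (E.filter (restr K · = u)).card := by
  rw [condX, prKH_eq_card_mul hU, prIKH_eq_card_mul hU, mul_div_mul_right _ _ hq]

lemma condX_pos (hU : ∀ x, prXH J vis x h = if x ∈ E then q else 0) (hq : q ≠ 0)
    {x : Fin n → X} (hx : x ∈ E) (i : Fin n) :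
    0 < condX J K vis i (x i) (restr K x) h := by
  rw [condX_eq_card_div hU hq]
  exact div_pos (Nat.cast_pos.mpr (card_pos.mpr ⟨x, by simp [hx]⟩))
    (Nat.cast_pos.mpr (card_pos.mpr ⟨x, by simp [hx]⟩))

lemma prKH_pos_iff (hU : ∀ x, prXH J vis x h = if x ∈ E then q else 0) (hq : 0 < q)
    (u : ↥K → X) : 0 < prKH J K vis u h ↔ ∃ y ∈ E, restr K y = u := by
  rw [prKH_eq_card_mul hU, mul_pos_iff_of_pos_right hq, Nat.cast_pos, card_pos]
  simp [Finset.Nonempty]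

variable [AddCommGroup X]

/-- All nonempty fibres of `E` over `X_K` have one size, and so do those of
`{z ∈ E | z_i = x_i}`. -/
lemma condX_eq_ite (hE : IsAffine E) (hU : ∀ x, prXH J vis x h = if x ∈ E then q else 0)
    (hq : q ≠ 0) {x y : Fin n → X} (hx : x ∈ E) (hy : y ∈ E) (i : Fin n) :
    condX J K vis i (x i) (restr K y) h =
      if ∃ z ∈ E, restr K z = restr K y ∧ z i = x i
      then condX J K vis i (x i) (restr K x) h else 0 := by
  have hden : (E.filter (restr K · = restr K y)).card = (E.filter (restr K · = restr K x)).card :=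
    hE.card_fiber_eq (restrAddHom K) hy hx
  have hEi := hE.filter_map_eq (Pi.evalAddMonoidHom (fun _ => X) i) (x i)
  simp only [condX_eq_card_div hU hq]
  split_ifs with hz
  · obtain ⟨z, hzE, hzy, hzi⟩ := hz
    have hnum : ((E.filter (· i = x i)).filter (restr K · = restr K z)).card =
        ((E.filter (· i = x i)).filter (restr K · = restr K x)).card :=
      hEi.card_fiber_eq (restrAddHom K) (by simpa [hzE] using hzi) (by simp [hx])
    rw [← hzy, hnum, hzy, hden]
  · rw [filter_eq_empty_iff.mpr fun z hzi hzy =>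
      hz ⟨z, (mem_filter.1 hzi).1, hzy, (mem_filter.1 hzi).2⟩]
    simp

lemma minC_eq_ite (hE : IsAffine E) (hU : ∀ x, prXH J vis x h = if x ∈ E then q else 0)
    (hq : 0 < q) {x : Fin n → X} (hx : x ∈ E) (i : Fin n) :
    minC J K vis i (x i) h =
      if AttainedOnFibers E (restr K) (· i) (x i)
      then condX J K vis i (x i) (restr K x) h else 0 := by
  have hvals : {r | ∃ u, 0 < prKH J K vis u h ∧ r = condX J K vis i (x i) u h} =
      {r | ∃ y ∈ E, r = condX J K vis i (x i) (restr K y) h} := by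
    ext r
    simp only [Set.mem_ofPred_eq, prKH_pos_iff hU hq]
    constructor
    · rintro ⟨_, ⟨y, hy, rfl⟩, rfl⟩; exact ⟨y, hy, rfl⟩
    · rintro ⟨y, hy, rfl⟩; exact ⟨_, ⟨y, hy, rfl⟩, rfl⟩
  rw [minC, hvals]
  split_ifs with hA
  · rw [← csInf_singleton (condX J K vis i (x i) (restr K x) h)]
    congr 1
    ext r
    simp only [Set.mem_ofPred_eq, Set.mem_singleton_iff]
    constructor
    · rintro ⟨y, hy, rfl⟩; rw [condX_eq_ite hE hU hq.ne' hx hy, if_pos (hA y hy)]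
    · rintro rfl; exact ⟨x, hx, rfl⟩
  · simp only [AttainedOnFibers, not_forall, not_exists, not_and] at hA
    obtain ⟨y, hy, hno⟩ := hA
    refine IsLeast.csInf_eq ⟨⟨y, hy, ?_⟩, ?_⟩
    · rw [condX_eq_ite hE hU hq.ne' hx hy, if_neg (by simpa using hno)]
    · rintro _ ⟨z, hz, rfl⟩
      rw [condX_eq_ite hE hU hq.ne' hx hz]
      split_ifs
      exacts [(condX_pos hU hq.ne' hx i).le, le_rfl]

end Uniform

section Step

variable {X : Type} [Fintype X] [DecidableEq X] [AddCommGroup X] {n : ℕ}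
  {p : (Fin n → X) → ℝ} {K : Finset (Fin n)} {σ : Equiv.Perm (Fin n)}
  {J : (Fin n → X) → (Fin n → Option X) → ℝ} {q : ℝ}

lemma keep_or_erase (hJ : IsSequentialMechanismOrd p K σ J) (hq : 0 < q) (t : Fin n)
    {h : Fin n → Option X} {E : Finset (Fin n → X)} (hE : IsAffine E)
    (hU : ∀ x, prXH J (visOrd σ t) x h = if x ∈ E then q else 0) :
    (∀ x, prXHY J (visOrd σ t) x h (σ t) none = 0) ∨
      ∀ x, prXHY J (visOrd σ t) x h (σ t) (some (x (σ t))) = 0 := by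
  obtain ⟨hJ0, -, hsupp, hmech⟩ := hJ
  have hout : ∀ x ∉ E, ∀ b, prXHY J (visOrd σ t) x h (σ t) b = 0 := fun x hx =>
    prXHY_eq_zero_of_prXH_eq_zero hJ0 (by rw [hU, if_neg hx]) _
  have hin : ∀ x ∈ E, 0 < prXH J (visOrd σ t) x h := fun x hx => by
    rwa [hU, if_pos hx]
  by_cases hA : ∃ x₀ ∈ E, AttainedOnFibers E (restr K) (· (σ t)) (x₀ (σ t))
  · left
    intro x
    by_cases hx : x ∈ E
    · obtain ⟨x₀, -, hx₀⟩ := hA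
      have hkeep := hmech t x h (hin x hx)
      have hAx : AttainedOnFibers E (restr K) (· (σ t)) (x (σ t)) :=
        hE.attainedOnFibers (restrAddHom K) (Pi.evalAddMonoidHom (fun _ => X) (σ t)) hx₀ hx
      rw [minC_eq_ite hE hU hq hx, if_pos hAx,
        div_self (condX_pos hU hq.ne' hx _).ne', one_mul] at hkeep
      linarith [prXHY_some_add_prXHY_none hJ0 hsupp x h (σ t) (vis := visOrd σ t)]
    · exact hout x hx none
  · right
    intro x
    by_cases hx : x ∈ E
    · have hkeep := hmech t x h (hin x hx)
      rwa [minC_eq_ite hE hU hq hx, if_neg fun hAx => hA ⟨x, hx, hAx⟩, zero_div,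
        zero_mul] at hkeep
    · exact hout x hx _

lemma exists_isAffine_prXH_eq (hJ : IsSequentialMechanismOrd p K σ J)
    {A : Finset (Fin n → X)} (hA : IsAffine A) (hq : 0 < q)
    (hp : ∀ x, p x = if x ∈ A then q else 0) :
    ∀ t ≤ n, ∀ h : Fin n → Option X, ∃ E, IsAffine E ∧
      ∀ x, prXH J (visOrd σ t) x h = if x ∈ E then q else 0 := by
  intro t
  induction t with
  | zero => exact fun _ h => ⟨A, hA, fun x => by rw [prXH_visOrd_zero, hJ.2.1, hp]⟩
  | succ t ih =>
    intro ht h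
    obtain ⟨E, hE, hU⟩ := ih (by omega) h
    have hstep := prXH_visOrd_succ (J := J) σ ⟨t, ht⟩ (h := h)
    rcases keep_or_erase hJ hq ⟨t, ht⟩ hE hU with hkeep | herase
    · refine ⟨E.filter fun x => h (σ ⟨t, ht⟩) = some (x (σ ⟨t, ht⟩)), hE.filter ?_,
        fun x => ?_⟩
      · intro x y z hx hy hz
        simp_all
      · rw [hstep, prXHY_eq_ite_of_prXHY_none_eq_zero hJ.1 hJ.2.2.1 (hkeep x), hU]
        by_cases hx : x ∈ E <;> simp [hx]
    · refine ⟨E.filter fun _ => h (σ ⟨t, ht⟩) = none, hE.filter fun _ _ _ h₁ _ _ => h₁,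
        fun x => ?_⟩
      rw [hstep, prXHY_eq_ite_of_prXHY_some_eq_zero hJ.1 hJ.2.2.1 (herase x), hU]
      by_cases hx : x ∈ E <;> by_cases hc : h (σ ⟨t, ht⟩) = none <;> simp [hx, hc]

theorem erasure_prob_eq_zero_or_one (hJ : IsSequentialMechanismOrd p K σ J)
    {A : Finset (Fin n → X)} (hA : IsAffine A) (hq : 0 < q)
    (hp : ∀ x, p x = if x ∈ A then q else 0) (t : Fin n) (x : Fin n → X)
    (h : Fin n → Option X) :
    prXHY J (visOrd σ t) x h (σ t) none / prXH J (visOrd σ t) x h = 0 ∨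
    prXHY J (visOrd σ t) x h (σ t) none / prXH J (visOrd σ t) x h = 1 := by
  obtain ⟨E, hE, hU⟩ := exists_isAffine_prXH_eq hJ hA hq hp t t.2.le h
  rcases keep_or_erase hJ hq t hE hU with hkeep | herase
  · left
    rw [hkeep x, zero_div]
  · rw [prXHY_eq_ite_of_prXHY_some_eq_zero hJ.1 hJ.2.2.1 (herase x), if_pos rfl]
    exact (eq_or_ne (prXH J (visOrd σ t) x h) 0).imp (fun h0 => by simp [h0]) div_self

end Step

section Xor

-- `Bool` is the Boolean ring `𝔽₂`: addition is `xor`.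
lemma Bool.natCast_eq_decide (c : ℕ) : (c : Bool) = decide (c % 2 = 1) := by
  induction c with
  | zero => rfl
  | succ c ih =>
    rw [Nat.cast_succ, ih]
    rcases Nat.mod_two_eq_zero_or_one c with hc | hc <;>
      simp [hc, Nat.add_mod, Bool.one_eq_true, Bool.add_eq_xor]

lemma Bool.sum_eq_decide_card_filter {α : Type*} (s : Finset α) (f : α → Bool) :
    ∑ a ∈ s, f a = decide ((s.filter (f · = true)).card % 2 = 1) := by
  rw [← Bool.natCast_eq_decide, ← sum_boole]
  exact sum_congr rfl fun a _ => by cases f a <;> rfl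

variable {m k : ℕ} (S : Fin k → Finset (Fin m))

lemma parity_eq_sum (b : Edge S → Bool) (j : Fin k) :
    parity S b j = ∑ i ∈ (S j).attach, b ⟨(i.1, j), i.2⟩ :=
  (Bool.sum_eq_decide_card_filter _ _).symm

lemma parity_add (a b : Edge S → Bool) (j : Fin k) :
    parity S (a + b) j = parity S a j + parity S b j := by
  simp only [parity_eq_sum]
  exact sum_add_distrib

lemma parity_zero (j : Fin k) : parity S 0 j = 0 := by
  simp only [parity_eq_sum]
  exact sum_const_zero

def seqOfAddHom : (Edge S → Bool) →+ (Fin (m + k) → Fin k → Bool) where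
  toFun := seqOf S
  map_zero' := by
    ext i j
    by_cases hi : (i : ℕ) < m
    · simp only [seqOf, hi, Xlow, dif_pos]
      split_ifs <;> rfl
    · simp only [seqOf, hi, dif_neg, not_false_eq_true]
      exact parity_zero S _
  map_add' a b := by
    ext i j
    by_cases hi : (i : ℕ) < m
    · simp only [seqOf, hi, Xlow, dif_pos, Pi.add_apply]
      split_ifs <;> rfl
    · simp only [seqOf, hi, dif_neg, not_false_eq_true, Pi.add_apply]
      exact parity_add S a b _

lemma seqOf_injective : Function.Injective (seqOf S) := by
  intro a b hab
  funext ⟨⟨i, j⟩, hij⟩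
  simpa [seqOf, Xlow, hij] using congr_fun (congr_fun hab (Fin.castAdd k i)) j

lemma pXor_eq_ite (x : Fin (m + k) → Fin k → Bool) :
    pXor S x = if x ∈ univ.image (seqOf S) then (1 / 2 : ℝ) ^ Fintype.card (Edge S) else 0 := by
  rw [pXor]
  split_ifs with hx
  · obtain ⟨b, -, rfl⟩ := mem_image.mp hx
    rw [sum_eq_single b (fun c _ hc => if_neg fun h => hc (seqOf_injective S h)) (by simp),
      if_pos rfl]
  · exact sum_eq_zero fun b _ => if_neg fun h => hx (mem_image.mpr ⟨b, mem_univ b, h⟩)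

end Xor

theorem xor_deterministic_erasure_general {m k : ℕ}
    (S : Fin k → Finset (Fin m))
    (σ : Equiv.Perm (Fin (m + k)))
    (J : (Fin (m + k) → (Fin k → Bool)) → (Fin (m + k) → Option (Fin k → Bool)) → ℝ)
    (hJ : IsSequentialMechanismOrd (pXor S) (sensXor m k) σ J)
    (t : Fin (m + k)) (x : Fin (m + k) → (Fin k → Bool))
    (h : Fin (m + k) → Option (Fin k → Bool)) :
    prXHY J (visOrd σ (t : ℕ)) x h (σ t) none / prXH J (visOrd σ (t : ℕ)) x h = 0 ∨
    prXHY J (visOrd σ (t : ℕ)) x h (σ t) none / prXH J (visOrd σ (t : ℕ)) x h = 1 :=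
  erasure_prob_eq_zero_or_one hJ (isAffine_image_univ (seqOfAddHom S)) (by positivity)
    (pXor_eq_ite S) t x h

/-- deterministic erasure in the XOR construction, Lemma 1: for the
distribution `p(x; U, 𝒮)` with sensitive set `K = {m+1, …, m+k}` and any processing
order `σ`, the sequential privacy mechanism has deterministic erasure decisions: at every
step `t`, the conditional probability of erasing position `σ t`, given the realization
`x` and the previously generated outputs, is either `0` or `1` (for every realization
occurring with positive probability). -/
theorem xor_deterministic_erasure {m k : ℕ} (hm : 1 ≤ m) (hk : 1 ≤ k)
    (S : Fin k → Finset (Fin m))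
    (hSne : ∀ j, (S j).Nonempty)
    (hScover : ∀ v : Fin m, ∃ j, v ∈ S j)
    (σ : Equiv.Perm (Fin (m + k)))
    (J : (Fin (m + k) → (Fin k → Bool)) → (Fin (m + k) → Option (Fin k → Bool)) → ℝ)
    (hJ : IsSequentialMechanismOrd (pXor S) (sensXor m k) σ J)
    (t : Fin (m + k)) (x : Fin (m + k) → (Fin k → Bool))
    (h : Fin (m + k) → Option (Fin k → Bool))
    (hpos : 0 < prXH J (visOrd σ (t : ℕ)) x h) :
    prXHY J (visOrd σ (t : ℕ)) x h (σ t) none / prXH J (visOrd σ (t : ℕ)) x h = 0 ∨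
    prXHY J (visOrd σ (t : ℕ)) x h (σ t) none / prXH J (visOrd σ (t : ℕ)) x h = 1 :=
  xor_deterministic_erasure_general S σ J hJ t x h

end GenotypeHiding
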